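/- arXiv:2210.08599 — 4 statements merged into one kernel-verified Lean document; each statement's English description precedes it below -/
import Mathlib

section
/- Let L ≥ 1, α ∈ (0,1), and Δ = (α^{1/2} − α)/L. Suppose ξ = {ξ_t}_{t=0}^T is a stochastic process with finite support, Φ is a square matrix that is (L,α)-stable (i.e. ‖Φ^t‖ ≤ Lα^t for all t ≥ 0), and the square random matrices Φ_t(ξ_{0:t}) satisfy ‖Φ − Φ_t(ξ_{0:t})‖ ≤ Δ almost surely for all t ∈ {1,…,T}. Then {Φ_t(ξ_{0:t})}_{t=1}^T is (L, α^{1/2})-stable: ‖∏_{t=t'+1}^{t''} Φ_t(ξ_{0:t})‖ ≤ L α^{(t''−t')/2} almost surely for all 0 ≤ t' < t'' ≤ T. -/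
open Matrix BigOperators

/-- Operator 2-norm of a real matrix, i.e. the norm of the induced linear map between
Euclidean spaces. -/
noncomputable def opNorm {m n : Type*} [Fintype m] [Fintype n] [DecidableEq n]
    (A : Matrix m n ℝ) : ℝ :=
  ‖LinearMap.toContinuousLinearMap (Matrix.toEuclideanLin A)‖

/-- `mprod Φ a k = Φ (a+k-1) * ⋯ * Φ (a+1) * Φ a`: the ordered product of `k` factors
starting at index `a` (larger indices on the left). -/
def mprod {n : ℕ} (Φ : ℕ → Matrix (Fin n) (Fin n) ℝ) (a : ℕ) : ℕ → Matrix (Fin n) (Fin n) ℝ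
  | 0 => 1
  | k + 1 => Φ (a + k) * mprod Φ a k

/-- Squared Euclidean norm of a vector. -/
noncomputable def sqnorm {m : Type*} [Fintype m] (v : m → ℝ) : ℝ := ∑ i, v i ^ 2

/-- A discrete-time stochastic process with finitely many scenarios, each of positive
probability (so “almost surely” means “for every scenario”).  `ξ t s` is the value of the
process at time `t` in scenario `s`. -/
structure FiniteProcess (Ξ : Type) where
  S : Type
  [finS : Fintype S]
  P : S → ℝ
  P_pos : ∀ s, 0 < P s
  P_sum : ∑ s, P s = 1
  ξ : ℕ → S → Ξ

attribute [instance] FiniteProcess.finS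

namespace FiniteProcess

variable {Ξ : Type} (proc : FiniteProcess Ξ)

/-- Two scenarios have the same past `ξ₀,…,ξ_t`. -/
def PrefixEq (t : ℕ) (s s' : proc.S) : Prop := ∀ τ ≤ t, proc.ξ τ s = proc.ξ τ s'

/-- `f` depends only on `ξ₀,…,ξ_t` (nonanticipativity). -/
def Adapted (t : ℕ) {β : Type*} (f : proc.S → β) : Prop :=
  ∀ s s', proc.PrefixEq t s s' → f s = f s'

open Classical in
/-- Conditional expectation of `f` given `ξ₀,…,ξ_t` equal to the prefix of scenario `sb`. -/
noncomputable def cexp (t : ℕ) (sb : proc.S) (f : proc.S → ℝ) : ℝ :=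
  (∑ s, if proc.PrefixEq t s sb then proc.P s * f s else 0) /
    (∑ s, if proc.PrefixEq t s sb then proc.P s else 0)

open Classical in
/-- Probability of an event. -/
noncomputable def prob (E : proc.S → Prop) : ℝ := ∑ s, if E s then proc.P s else 0

end FiniteProcess

/-! Fix a scenario, write `A` for the nominal matrix, `B j` for the perturbed factors and `P k`
for their product of length `k`. The variation-of-constants expansion
`P k = A ^ k + ∑_{j<k} A ^ (k-1-j) (B j - A) P j` and strong induction give `‖P k‖ ≤ L β ^ k`
for `β = α + L Δ`, because `α ^ k + ∑_{j<k} α ^ (k-1-j) (β - α) β ^ j = β ^ k` (geometric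
sum). The choice `Δ = (√α - α) / L` makes `β = √α`. -/

open Finset

section Ring

variable {R : Type*} [Ring R]

lemma eq_pow_add_sum_pow_mul_sub_mul {A : R} {B P : ℕ → R} (hP0 : P 0 = 1)
    (hP : ∀ k, P (k + 1) = B k * P k) (k : ℕ) :
    P k = A ^ k + ∑ j ∈ range k, A ^ (k - 1 - j) * ((B j - A) * P j) := by
  induction k with
  | zero => simp [hP0]
  | succ k ih =>
    have hshift : ∀ j ∈ range k, A * (A ^ (k - 1 - j) * ((B j - A) * P j)) =
        A ^ (k - j) * ((B j - A) * P j) := by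
      intro j hj
      rw [show k - j = k - 1 - j + 1 by grind, pow_succ', mul_assoc]
    calc P (k + 1) = A * P k + (B k - A) * P k := by rw [hP, ← add_mul, add_sub_cancel]
      _ = _ := by
        rw [sum_range_succ, Nat.add_sub_cancel, Nat.sub_self, pow_zero, one_mul, ih, mul_add,
          mul_sum, sum_congr rfl hshift, ← pow_succ', ← ih, add_assoc]

end Ring

section NormedRing

variable {R : Type*} [NormedRing R]

lemma norm_le_of_pow_stable_of_norm_sub_le {A : R} {B P : ℕ → R} {L α δ : ℝ} {K : ℕ}
    (hP0 : P 0 = 1) (hP : ∀ k, P (k + 1) = B k * P k)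
    (hA : ∀ t, ‖A ^ t‖ ≤ L * α ^ t) (hB : ∀ j < K, ‖A - B j‖ ≤ δ) :
    ∀ k ≤ K, ‖P k‖ ≤ L * (α + L * δ) ^ k := by
  intro k
  induction k using Nat.strong_induction_on with
  | _ k ih =>
    intro hkK
    set β := α + L * δ
    have hterm : ∀ j ∈ range k, ‖A ^ (k - 1 - j) * ((B j - A) * P j)‖ ≤
        L * α ^ (k - 1 - j) * (δ * (L * β ^ j)) := by
      intro j hj
      have hjk := mem_range.mp hj
      have hδ : 0 ≤ δ := (norm_nonneg _).trans (hB j (by omega))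
      refine (norm_mul_le _ _).trans (mul_le_mul (hA _) ((norm_mul_le _ _).trans ?_)
        (by positivity) ((norm_nonneg _).trans (hA _)))
      rw [norm_sub_rev]
      exact mul_le_mul (hB j (by omega)) (ih j hjk (by omega)) (norm_nonneg _) hδ
    have htelescope : L * α ^ k + ∑ j ∈ range k, L * α ^ (k - 1 - j) * (δ * (L * β ^ j)) =
        L * β ^ k := by
      calc _ = L * (α ^ k + (∑ j ∈ range k, β ^ j * α ^ (k - 1 - j)) * (β - α)) := by
            rw [mul_add, sum_mul, mul_sum]
            exact congrArg _ (sum_congr rfl fun j _ => by ring)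
        _ = L * β ^ k := by rw [geom_sum₂_mul]; ring
    calc ‖P k‖
        ≤ ‖A ^ k‖ + ∑ j ∈ range k, ‖A ^ (k - 1 - j) * ((B j - A) * P j)‖ := by
          rw [eq_pow_add_sum_pow_mul_sub_mul hP0 hP k]
          exact (norm_add_le _ _).trans (add_le_add le_rfl (norm_sum_le _ _))
      _ ≤ L * α ^ k + ∑ j ∈ range k, L * α ^ (k - 1 - j) * (δ * (L * β ^ j)) :=
          add_le_add (hA k) (sum_le_sum hterm)
      _ = L * β ^ k := htelescope

end NormedRing

lemma opNorm_eq_norm_toEuclideanCLM {n : ℕ} (A : Matrix (Fin n) (Fin n) ℝ) :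
    opNorm A = ‖Matrix.toEuclideanCLM (𝕜 := ℝ) A‖ := by
  congr 1; infer_instance

lemma opNorm_mprod_le_of_pow_stable {n : ℕ} {A : Matrix (Fin n) (Fin n) ℝ}
    {Ψ : ℕ → Matrix (Fin n) (Fin n) ℝ} {L α δ : ℝ} {a k : ℕ}
    (hA : ∀ t, opNorm (A ^ t) ≤ L * α ^ t) (hΨ : ∀ j < k, opNorm (A - Ψ (a + j)) ≤ δ) :
    opNorm (mprod Ψ a k) ≤ L * (α + L * δ) ^ k := by
  set f := Matrix.toEuclideanCLM (𝕜 := ℝ) (n := Fin n)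
  simp only [opNorm_eq_norm_toEuclideanCLM, map_pow, map_sub] at hA hΨ ⊢
  exact norm_le_of_pow_stable_of_norm_sub_le (B := fun j => f (Ψ (a + j)))
    (P := fun j => f (mprod Ψ a j)) (map_one f) (fun j => map_mul f _ _) hA hΨ k le_rfl

theorem stochastic_stability_of_perturbed_stable_general
    {T n : ℕ} {Ξ : Type} (proc : FiniteProcess Ξ)
    (L α : ℝ) (hL : 1 ≤ L) (hα0 : 0 < α)
    (Φdet : Matrix (Fin n) (Fin n) ℝ)
    (Φ : ℕ → proc.S → Matrix (Fin n) (Fin n) ℝ)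
    (hstable : ∀ t : ℕ, opNorm (Φdet ^ t) ≤ L * α ^ t)
    (hclose : ∀ (s : proc.S) (t : ℕ), 1 ≤ t → t ≤ T →
      opNorm (Φdet - Φ t s) ≤ (Real.sqrt α - α) / L) :
    ∀ (s : proc.S) (t' k : ℕ), 1 ≤ k → t' + k ≤ T →
      opNorm (mprod (fun t => Φ t s) (t' + 1) k) ≤ L * Real.sqrt (α ^ k) := by
  intro s t' k _ hkT
  have hrate : α + L * ((Real.sqrt α - α) / L) = Real.sqrt α := by
    field_simp
    ring
  have hsqrt : Real.sqrt (α ^ k) = Real.sqrt α ^ k :=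
    (Real.sqrt_eq_iff_eq_sq (by positivity) (by positivity)).mpr
      (by rw [← pow_mul, mul_comm, pow_mul, Real.sq_sqrt hα0.le])
  rw [hsqrt, ← hrate]
  exact opNorm_mprod_le_of_pow_stable hstable fun j hj => hclose s _ (by omega) (by omega)

/-- Proposition `just`, part (a).  Let `L ≥ 1`, `α ∈ (0,1)` and
`Δ = (√α − α)/L`.  If `Φ` is `(L,α)`-stable (`‖Φ^t‖ ≤ Lα^t` for all `t ≥ 0`) and the
random matrices `Φ_t(ξ_{0:t})` (adapted, i.e. functions of `ξ_{0:t}`) satisfy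
`‖Φ − Φ_t(ξ_{0:t})‖ ≤ Δ` almost surely for `t ∈ {1,…,T}`, then `{Φ_t(ξ_{0:t})}` is
`(L, √α)`-stable: for all `0 ≤ t' < t'' ≤ T`,
`‖Φ_{t''}(ξ_{0:t''}) ⋯ Φ_{t'+1}(ξ_{0:t'+1})‖ ≤ L α^{(t''−t')/2}` almost surely. -/
theorem stochastic_stability_of_perturbed_stable
    {T n : ℕ} {Ξ : Type} (proc : FiniteProcess Ξ)
    (L α : ℝ) (hL : 1 ≤ L) (hα0 : 0 < α) (hα1 : α < 1)
    (Φdet : Matrix (Fin n) (Fin n) ℝ)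
    (Φ : ℕ → proc.S → Matrix (Fin n) (Fin n) ℝ)
    (hadapt : ∀ t, 1 ≤ t → t ≤ T → proc.Adapted t (Φ t))
    (hstable : ∀ t : ℕ, opNorm (Φdet ^ t) ≤ L * α ^ t)
    (hclose : ∀ (s : proc.S) (t : ℕ), 1 ≤ t → t ≤ T →
      opNorm (Φdet - Φ t s) ≤ (Real.sqrt α - α) / L) :
    ∀ (s : proc.S) (t' k : ℕ), 1 ≤ k → t' + k ≤ T →
      opNorm (mprod (fun t => Φ t s) (t' + 1) k) ≤ L * Real.sqrt (α ^ k) :=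
  stochastic_stability_of_perturbed_stable_general proc L α hL hα0 Φdet Φ hstable hclose
end

section
/- Let L ≥ 1, α ∈ (0,1), and Δ = (α^{1/2} − α)/L. Suppose ξ = {ξ_t}_{t=0}^T is a stochastic process with finite support, the deterministic matrix pair (A,B) is (L,α)-stabilizable (there exists K with ‖K‖ ≤ L such that A − BK is (L,α)-stable), and the random matrices satisfy ‖A − A(ξ_t)‖ ≤ Δ/2 and ‖B − B(ξ_t)‖ ≤ Δ/(2L) almost surely for all t ∈ {1,…,T}. Then the random pair ({A(ξ_t)}_{t=1}^T, {B(ξ_t)}_{t=1}^T) is (L, α^{1/2})-stabilizable: there exist almost surely L-bounded nonanticipative matrices K_t(ξ_{0:t}), t ∈ {0,…,T−1}, such that ‖∏_{t=t'+1}^{t''} (A(ξ_t) − B(ξ_t)K_{t−1}(ξ_{0:t−1}))‖ ≤ L α^{(t''−t')/2} almost surely for all 0 ≤ t' < t'' ≤ T. -/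
/-! With the constant feedback `K` that stabilizes `(A, B)`, every closed-loop matrix
`A(ξ_t) - B(ξ_t) K` lies within `Δ = (√α - α)/L` of `M = A - B K`. Expanding the product of
`k` such matrices around `M ^ k` (variation of constants) and bounding the terms by strong
induction gives `L α^k + L Δ · L ∑_j α^(k-1-j) √α^j`, which telescopes to `L √α^k` because
`L Δ = √α - α`. -/

open Matrix BigOperators

-- Under this instance `opNorm A` is definitionally `‖A‖`; the main proof uses this silently.
open scoped Matrix.Norms.L2Operator

theorem mprod_eq_pow_add_sum {n : ℕ} (Φ : ℕ → Matrix (Fin n) (Fin n) ℝ)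
    (M : Matrix (Fin n) (Fin n) ℝ) (a k : ℕ) :
    mprod Φ a k = M ^ k + ∑ j ∈ Finset.range k,
      M ^ (k - 1 - j) * (Φ (a + j) - M) * mprod Φ a j := by
  induction k with
  | zero => simp [mprod]
  | succ k ih =>
    have hshift : ∀ j ∈ Finset.range k, M * (M ^ (k - 1 - j) * (Φ (a + j) - M) * mprod Φ a j)
        = M ^ (k + 1 - 1 - j) * (Φ (a + j) - M) * mprod Φ a j := fun j hj => by
      have : k + 1 - 1 - j = k - 1 - j + 1 := by have := Finset.mem_range.mp hj; omega
      rw [this, pow_succ', mul_assoc, mul_assoc, mul_assoc]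
    calc mprod Φ a (k + 1) = M * mprod Φ a k + (Φ (a + k) - M) * mprod Φ a k := by
          rw [mprod, ← add_mul, add_sub_cancel]
      _ = _ := by
          nth_rw 1 [ih]
          rw [mul_add, Finset.mul_sum, Finset.sum_congr rfl hshift, ← pow_succ',
            Finset.sum_range_succ, Nat.add_sub_cancel, Nat.sub_self, pow_zero, one_mul, add_assoc]

theorem norm_mprod_le_of_norm_sub_le {n : ℕ} {Φ : ℕ → Matrix (Fin n) (Fin n) ℝ}
    {M : Matrix (Fin n) (Fin n) ℝ} {a k : ℕ} {L α β δ : ℝ}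
    (hM : ∀ t, ‖M ^ t‖ ≤ L * α ^ t) (hΦ : ∀ j < k, ‖Φ (a + j) - M‖ ≤ δ)
    (hδ : L * δ = β - α) :
    ‖mprod Φ a k‖ ≤ L * β ^ k := by
  induction k using Nat.strong_induction_on with
  | _ k ih =>
  have hterm : ∀ j ∈ Finset.range k, ‖M ^ (k - 1 - j) * (Φ (a + j) - M) * mprod Φ a j‖
      ≤ L * α ^ (k - 1 - j) * δ * (L * β ^ j) := fun j hj => by
    have hjk := Finset.mem_range.mp hj
    have hPj := ih j hjk fun i hi => hΦ i (hi.trans hjk)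
    have hMj := hM (k - 1 - j)
    have hΦj := hΦ j hjk
    have hMj0 := (norm_nonneg _).trans hMj
    have hΦj0 := (norm_nonneg _).trans hΦj
    calc _ ≤ ‖M ^ (k - 1 - j)‖ * ‖Φ (a + j) - M‖ * ‖mprod Φ a j‖ :=
          (norm_mul_le _ _).trans (mul_le_mul_of_nonneg_right (norm_mul_le _ _) (norm_nonneg _))
      _ ≤ _ := mul_le_mul (mul_le_mul hMj hΦj (norm_nonneg _) hMj0) hPj (norm_nonneg _)
          (mul_nonneg hMj0 hΦj0)
  calc ‖mprod Φ a k‖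
      ≤ ‖M ^ k‖ + ∑ j ∈ Finset.range k, ‖M ^ (k - 1 - j) * (Φ (a + j) - M) * mprod Φ a j‖ := by
        rw [mprod_eq_pow_add_sum Φ M]
        exact (norm_add_le _ _).trans (add_le_add_right (norm_sum_le _ _) _)
    _ ≤ L * α ^ k + ∑ j ∈ Finset.range k, L * α ^ (k - 1 - j) * δ * (L * β ^ j) :=
        add_le_add (hM k) (Finset.sum_le_sum hterm)
    _ = L * (α ^ k + (∑ j ∈ Finset.range k, β ^ j * α ^ (k - 1 - j)) * (L * δ)) := by
        rw [Finset.sum_mul, mul_add, Finset.mul_sum]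
        congr 1
        exact Finset.sum_congr rfl fun j _ => by ring
    _ = L * β ^ k := by rw [hδ, geom_sum₂_mul]; ring

theorem norm_feedback_sub_feedback_le {m n p : Type*} [Fintype m] [Fintype n] [Fintype p]
    [DecidableEq n] [DecidableEq p] (A A' : Matrix m n ℝ) (B B' : Matrix m p ℝ)
    (K : Matrix p n ℝ) :
    ‖(A' - B' * K) - (A - B * K)‖ ≤ ‖A - A'‖ + ‖B - B'‖ * ‖K‖ := by
  have : (A' - B' * K) - (A - B * K) = -(A - A') + (B - B') * K := by
    rw [Matrix.sub_mul]; abel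
  rw [this]
  exact (norm_add_le _ _).trans (by rw [norm_neg]; gcongr; exact Matrix.l2_opNorm_mul _ _)

theorem Real.sqrt_pow_eq {x : ℝ} (hx : 0 ≤ x) (k : ℕ) : √(x ^ k) = √x ^ k := by
  rw [Real.sqrt_eq_iff_eq_sq (pow_nonneg hx k) (pow_nonneg (Real.sqrt_nonneg x) k), ← pow_mul,
    mul_comm, pow_mul, Real.sq_sqrt hx]

theorem stochastic_stabilizability_of_perturbed_stabilizable_general
    {T nx nu : ℕ} {Ξ : Type} (proc : FiniteProcess Ξ)
    (L α : ℝ) (hL : 1 ≤ L) (hα0 : 0 < α)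
    (A : Matrix (Fin nx) (Fin nx) ℝ) (B : Matrix (Fin nx) (Fin nu) ℝ)
    (Af : Ξ → Matrix (Fin nx) (Fin nx) ℝ) (Bf : Ξ → Matrix (Fin nx) (Fin nu) ℝ)
    (hstabilizable : ∃ K : Matrix (Fin nu) (Fin nx) ℝ, opNorm K ≤ L ∧
      ∀ t : ℕ, opNorm ((A - B * K) ^ t) ≤ L * α ^ t)
    (hcloseA : ∀ (s : proc.S) (t : ℕ), 1 ≤ t → t ≤ T →
      opNorm (A - Af (proc.ξ t s)) ≤ (Real.sqrt α - α) / L / 2)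
    (hcloseB : ∀ (s : proc.S) (t : ℕ), 1 ≤ t → t ≤ T →
      opNorm (B - Bf (proc.ξ t s)) ≤ (Real.sqrt α - α) / L / (2 * L)) :
    ∃ K : ℕ → proc.S → Matrix (Fin nu) (Fin nx) ℝ,
      (∀ t, t < T → proc.Adapted t (K t)) ∧
      (∀ (t : ℕ) (s : proc.S), t < T → opNorm (K t s) ≤ L) ∧
      ∀ (s : proc.S) (t' k : ℕ), 1 ≤ k → t' + k ≤ T →
        opNorm (mprod (fun t => Af (proc.ξ t s) - Bf (proc.ξ t s) * K (t - 1) s) (t' + 1) k)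
          ≤ L * Real.sqrt (α ^ k) := by
  obtain ⟨K, hK, hstable⟩ := hstabilizable
  have hL0 : 0 < L := by linarith
  refine ⟨fun _ _ => K, fun _ _ _ _ _ => rfl, fun _ _ _ => hK, fun s t' k _ hkT => ?_⟩
  rw [Real.sqrt_pow_eq hα0.le]
  refine norm_mprod_le_of_norm_sub_le hstable (δ := (√α - α) / L) (fun j hj => ?_)
    (by field_simp)
  have ht1 : 1 ≤ t' + 1 + j := by omega
  have htT : t' + 1 + j ≤ T := by omega
  calc _ ≤ ‖A - Af (proc.ξ (t' + 1 + j) s)‖ + ‖B - Bf (proc.ξ (t' + 1 + j) s)‖ * ‖K‖ :=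
        norm_feedback_sub_feedback_le _ _ _ _ _
    _ ≤ (√α - α) / L / 2 + (√α - α) / L / (2 * L) * L :=
        add_le_add (hcloseA s _ ht1 htT) ((mul_le_mul_of_nonneg_left hK (norm_nonneg _)).trans
          (mul_le_mul_of_nonneg_right (hcloseB s _ ht1 htT) hL0.le))
    _ = (√α - α) / L := by field_simp; ring

/-- Proposition `just`, part (b).  Let `L ≥ 1`, `α ∈ (0,1)`,
`Δ = (√α − α)/L`.  If the deterministic pair `(A,B)` is `(L,α)`-stabilizable and the
random matrices satisfy `‖A − A(ξ_t)‖ ≤ Δ/2`, `‖B − B(ξ_t)‖ ≤ Δ/(2L)` a.s. for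
`t ∈ {1,…,T}`, then the random pair `({A(ξ_t)},{B(ξ_t)})` is `(L,√α)`-stabilizable:
there are a.s. `L`-bounded nonanticipative feedbacks `K_t(ξ_{0:t})`, `t ∈ {0,…,T−1}`,
such that `‖∏_{t=t'+1}^{t''}(A(ξ_t) − B(ξ_t)K_{t−1}(ξ_{0:t−1}))‖ ≤ L α^{(t''−t')/2}`
almost surely for all `0 ≤ t' < t'' ≤ T`. -/
theorem stochastic_stabilizability_of_perturbed_stabilizable
    {T nx nu : ℕ} {Ξ : Type} (proc : FiniteProcess Ξ)
    (L α : ℝ) (hL : 1 ≤ L) (hα0 : 0 < α) (hα1 : α < 1)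
    (A : Matrix (Fin nx) (Fin nx) ℝ) (B : Matrix (Fin nx) (Fin nu) ℝ)
    (Af : Ξ → Matrix (Fin nx) (Fin nx) ℝ) (Bf : Ξ → Matrix (Fin nx) (Fin nu) ℝ)
    (hstabilizable : ∃ K : Matrix (Fin nu) (Fin nx) ℝ, opNorm K ≤ L ∧
      ∀ t : ℕ, opNorm ((A - B * K) ^ t) ≤ L * α ^ t)
    (hcloseA : ∀ (s : proc.S) (t : ℕ), 1 ≤ t → t ≤ T →
      opNorm (A - Af (proc.ξ t s)) ≤ (Real.sqrt α - α) / L / 2)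
    (hcloseB : ∀ (s : proc.S) (t : ℕ), 1 ≤ t → t ≤ T →
      opNorm (B - Bf (proc.ξ t s)) ≤ (Real.sqrt α - α) / L / (2 * L)) :
    ∃ K : ℕ → proc.S → Matrix (Fin nu) (Fin nx) ℝ,
      (∀ t, t < T → proc.Adapted t (K t)) ∧
      (∀ (t : ℕ) (s : proc.S), t < T → opNorm (K t s) ≤ L) ∧
      ∀ (s : proc.S) (t' k : ℕ), 1 ≤ k → t' + k ≤ T →
        opNorm (mprod (fun t => Af (proc.ξ t s) - Bf (proc.ξ t s) * K (t - 1) s) (t' + 1) k)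
          ≤ L * Real.sqrt (α ^ k) :=
  stochastic_stabilizability_of_perturbed_stabilizable_general proc L α hL hα0 A B Af Bf
    hstabilizable hcloseA hcloseB
end

section
/- Let G = (V,E) be a stage-T scenario tree with nodal probabilities π satisfying π_0 = 1, π_i > 0, and Σ_{j∈children(i)} π_j = π_i, and let π_{i|j} = π_i/π_j. Given node matrices {Φ̲_i} over the nodes at stages 1 through T, define the block matrix Φ̃ = {Φ̃_{ij}} by Φ̃_{ij} = (π_{i|j})^{1/2} Φ̲_i if i is a child of j and Φ̃_{ij} = 0 otherwise. If ‖Φ̲_i‖ ≤ L for all i at stages 1 through T, then ‖Φ̃‖ ≤ L. -/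
/-!
`Φ̃` sends the block `v_j` of a vector to the blocks `√(π_i/π_j) Φ̲_i v_j` at the children `i`
of `j`, so `‖Φ̃ v‖² = ∑_j ∑_{i child of j} (π_i/π_j) ‖Φ̲_i v_j‖² ≤ L² ∑_j ‖v_j‖²`, because the
probabilities of the children of `j` add up to at most `π_j`.
-/

open Matrix BigOperators

/-- A stage-`T` scenario tree: a finite rooted tree, encoded by the parent map, in which
every leaf is at distance `T` from the root (every node at stage `< T` has a child). -/
structure ScenarioTree (T : ℕ) where
  V : Type
  [finV : Fintype V]
  [deqV : DecidableEq V]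
  root : V
  parent : V → V
  stage : V → ℕ
  stage_root : stage root = 0
  parent_root : parent root = root
  stage_parent : ∀ i, i ≠ root → stage (parent i) + 1 = stage i
  root_unique : ∀ i, stage i = 0 → i = root
  stage_le : ∀ i, stage i ≤ T
  extend : ∀ i, stage i < T → ∃ j, parent j = i ∧ stage j = stage i + 1

attribute [instance] ScenarioTree.finV ScenarioTree.deqV

namespace ScenarioTree

variable {T : ℕ} (G : ScenarioTree T)

/-- The ancestor of `j` at stage `t` (for `t ≤ stage j`). -/
def anc (j : G.V) (t : ℕ) : G.V := G.parent^[G.stage j - t] j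

/-- `j` is a descendant of `k` (every node is a descendant of itself). -/
def Desc (k j : G.V) : Prop := G.stage k ≤ G.stage j ∧ G.anc j (G.stage k) = k

/-- The set of children of a node. -/
def children (i : G.V) : Finset G.V :=
  Finset.univ.filter fun j => G.parent j = i ∧ j ≠ G.root

open Classical in
/-- The stage-`t` nodes. -/
noncomputable def stageNodes (t : ℕ) : Finset G.V :=
  Finset.univ.filter fun i => G.stage i = t

open Classical in
/-- The descendants of `k` within the prediction window of length `W`
(stages `t(k),…,t(k)+W`). -/
noncomputable def subNodes (k : G.V) (W : ℕ) : Finset G.V :=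
  Finset.univ.filter fun i => G.Desc k i ∧ G.stage i ≤ G.stage k + W

/-- Ordered product of the nodal matrices along the path ending at `j`, with `c` factors:
`Φ̲_j * Φ̲_{a(j)} * ⋯` (so `pathProd G Φn j (t(j) − t(i))` is `∏ Φ̲_{i⇀j}`). -/
def pathProd {n : ℕ} (Φn : G.V → Matrix (Fin n) (Fin n) ℝ) (j : G.V) :
    ℕ → Matrix (Fin n) (Fin n) ℝ
  | 0 => 1
  | c + 1 => pathProd Φn j c * Φn (G.parent^[c] j)

/-- Tree `(L,α)`-stability of a family of nodal matrices: the ordered product along the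
path from any node `i` (exclusive) to any descendant `j` has norm `≤ L α^{t(j)−t(i)}`. -/
def TreeStable {n : ℕ} (Φn : G.V → Matrix (Fin n) (Fin n) ℝ) (L α : ℝ) : Prop :=
  ∀ i j : G.V, G.Desc i j →
    opNorm (G.pathProd Φn j (G.stage j - G.stage i)) ≤ L * α ^ (G.stage j - G.stage i)

end ScenarioTree

/-- The event that the history `ξ_{0:t(j)}` equals the nodal realizations along the
root-to-`j` path. -/
def NodeEvent {Ξ : Type} {T : ℕ} (proc : FiniteProcess Ξ) (G : ScenarioTree T)
    (ξn : G.V → Ξ) (j : G.V) (s : proc.S) : Prop :=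
  ∀ t ≤ G.stage j, proc.ξ t s = ξn (G.anc j t)

open Classical in
/-- Conditional expectation of `f` given the node event of `k`. -/
noncomputable def nodeCexp {Ξ : Type} {T : ℕ} (proc : FiniteProcess Ξ) (G : ScenarioTree T)
    (ξn : G.V → Ξ) (k : G.V) (f : proc.S → ℝ) : ℝ :=
  (∑ s, if NodeEvent proc G ξn k s then proc.P s * f s else 0) /
    (∑ s, if NodeEvent proc G ξn k s then proc.P s else 0)

/-- The scenario tree `(G, ξ̲, π)` represents the finite-support process `ξ` conditioned
on `ξ₀ = ξ₀(sb)`: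
(a) a sequence is a support prefix iff it is the nodal-realization sequence of a
root-to-node path (with the stage-`τ` ancestor realizing the first `τ+1` entries);
(b) `π` is a unit mass at the root flowing down the tree with positive values;
(c) `P[ξ_{0:t(j)} = ξ̲_{0→j} ∣ ξ_{0:t(k)} = ξ̲_{0→k}] = π_j/π_k` for ancestors `k` of `j`. -/
def Represents {Ξ : Type} {T : ℕ} (proc : FiniteProcess Ξ) (sb : proc.S)
    (G : ScenarioTree T) (ξn : G.V → Ξ) (πn : G.V → ℝ) : Prop :=
  (∀ (ζ : ℕ → Ξ) (τ t : ℕ), τ ≤ t → t ≤ T →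
    ((∃ s : proc.S, proc.ξ 0 s = proc.ξ 0 sb ∧ ∀ v ≤ t, proc.ξ v s = ζ v) ↔
      ∃ k j : G.V, G.stage k = τ ∧ G.stage j = t ∧ G.Desc k j ∧
        (∀ v ≤ τ, ξn (G.anc k v) = ζ v) ∧ (∀ v ≤ t, ξn (G.anc j v) = ζ v))) ∧
  (πn G.root = 1 ∧ (∀ i, 0 < πn i) ∧
    ∀ i : G.V, G.stage i < T → ∑ j ∈ G.children i, πn j = πn i) ∧
  (∀ k j : G.V, G.Desc k j →
    proc.prob (fun s => NodeEvent proc G ξn j s) =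
      πn j / πn k * proc.prob (fun s => NodeEvent proc G ξn k s))

/-- The probability-scaled block-subdiagonal matrix `Φ̃` built from nodal matrices:
`Φ̃_{ij} = (π_i/π_j)^{1/2} Φ̲_i` if `i` is a child of `j`, and `0` otherwise,
flattened to a matrix indexed by `V × Fin n`. -/
noncomputable def scaledShift {T n : ℕ} (G : ScenarioTree T) (πn : G.V → ℝ)
    (Φn : G.V → Matrix (Fin n) (Fin n) ℝ) :
    Matrix (G.V × Fin n) (G.V × Fin n) ℝ :=
  fun p q =>
    if G.parent p.1 = q.1 ∧ p.1 ≠ G.root then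
      Real.sqrt (πn p.1 / πn q.1) * Φn p.1 p.2 q.2
    else 0

theorem sqnorm_eq_norm_sq {m : Type*} [Fintype m] (v : m → ℝ) :
    sqnorm v = ‖WithLp.toLp 2 v‖ ^ 2 := by
  rw [EuclideanSpace.real_norm_sq_eq]
  rfl

theorem sqnorm_nonneg {m : Type*} [Fintype m] (v : m → ℝ) : 0 ≤ sqnorm v :=
  Finset.sum_nonneg fun i _ => sq_nonneg (v i)

theorem sqnorm_prod {κ n : Type*} [Fintype κ] [Fintype n] (v : κ × n → ℝ) :
    sqnorm v = ∑ j, sqnorm fun s => v (j, s) :=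
  Fintype.sum_prod_type _

section opNorm

variable {m n : Type*} [Fintype m] [Fintype n] [DecidableEq n]

theorem sqnorm_mulVec_le (A : Matrix m n ℝ) (v : n → ℝ) :
    sqnorm (A *ᵥ v) ≤ opNorm A ^ 2 * sqnorm v := by
  rw [sqnorm_eq_norm_sq, sqnorm_eq_norm_sq, ← mul_pow]
  exact pow_le_pow_left₀ (norm_nonneg _)
    ((LinearMap.toContinuousLinearMap (toEuclideanLin A)).le_opNorm (WithLp.toLp 2 v)) 2

theorem opNorm_le_of_sqnorm_mulVec_le (A : Matrix m n ℝ) {L : ℝ} (hL : 0 ≤ L)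
    (h : ∀ v, sqnorm (A *ᵥ v) ≤ L ^ 2 * sqnorm v) : opNorm A ≤ L := by
  refine ContinuousLinearMap.opNorm_le_bound _ hL fun x => ?_
  have hx := h x.ofLp
  rw [sqnorm_eq_norm_sq, sqnorm_eq_norm_sq, ← mul_pow] at hx
  exact le_of_pow_le_pow_left₀ two_ne_zero (by positivity) hx

theorem opNorm_smul (c : ℝ) (A : Matrix m n ℝ) : opNorm (c • A) = |c| * opNorm A := by
  rw [opNorm, opNorm, map_smul, map_smul, norm_smul, Real.norm_eq_abs]

end opNorm

section blockShift

variable {ι κ m n : Type*} [DecidableEq κ]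

def blockShift (p : ι → κ) (A : ι → Matrix m n ℝ) : Matrix (ι × m) (κ × n) ℝ :=
  fun a b => if p a.1 = b.1 then A a.1 a.2 b.2 else 0

theorem blockShift_mulVec [Fintype κ] [Fintype n] (p : ι → κ) (A : ι → Matrix m n ℝ)
    (v : κ × n → ℝ) (i : ι) (r : m) :
    (blockShift p A *ᵥ v) (i, r) = (A i *ᵥ fun s => v (p i, s)) r := by
  simp only [mulVec, dotProduct, blockShift, Fintype.sum_prod_type, ite_mul, zero_mul,
    Finset.sum_ite_irrel, Finset.sum_const_zero, Finset.sum_ite_eq, Finset.mem_univ, if_true]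

theorem opNorm_blockShift_le [Fintype ι] [Fintype κ] [Fintype m] [Fintype n] [DecidableEq n]
    (p : ι → κ) (A : ι → Matrix m n ℝ) {L : ℝ} (hL : 0 ≤ L)
    (hA : ∀ j, ∑ i ∈ Finset.univ.filter (p · = j), opNorm (A i) ^ 2 ≤ L ^ 2) :
    opNorm (blockShift p A) ≤ L := by
  refine opNorm_le_of_sqnorm_mulVec_le _ hL fun v => ?_
  calc sqnorm (blockShift p A *ᵥ v)
      = ∑ i, sqnorm (A i *ᵥ fun s => v (p i, s)) := by
        simp only [sqnorm_prod, blockShift_mulVec]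
    _ ≤ ∑ i, opNorm (A i) ^ 2 * sqnorm (fun s => v (p i, s)) :=
        Finset.sum_le_sum fun i _ => sqnorm_mulVec_le _ _
    _ = ∑ j, (∑ i ∈ Finset.univ.filter (p · = j), opNorm (A i) ^ 2) *
          sqnorm (fun s => v (j, s)) := by
        rw [← Finset.sum_fiberwise Finset.univ p]
        refine Finset.sum_congr rfl fun j _ => ?_
        rw [Finset.sum_mul]
        exact Finset.sum_congr rfl fun i hi => by rw [(Finset.mem_filter.1 hi).2]
    _ ≤ ∑ j, L ^ 2 * sqnorm (fun s => v (j, s)) :=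
        Finset.sum_le_sum fun j _ => mul_le_mul_of_nonneg_right (hA j) (sqnorm_nonneg _)
    _ = L ^ 2 * sqnorm v := by rw [sqnorm_prod, Finset.mul_sum]

end blockShift

namespace ScenarioTree

variable {T : ℕ} (G : ScenarioTree T)

theorem children_eq_empty_of_stage_eq {j : G.V} (hj : G.stage j = T) : G.children j = ∅ := by
  refine Finset.eq_empty_of_forall_notMem fun i hi => ?_
  obtain ⟨hparent, hi_root⟩ := (Finset.mem_filter.1 hi).2
  have hstage := G.stage_parent i hi_root
  rw [hparent, hj] at hstage
  exact absurd (G.stage_le i) (by omega)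

theorem sum_children_le {πn : G.V → ℝ} (hnonneg : ∀ i, 0 ≤ πn i)
    (hsum : ∀ i : G.V, G.stage i < T → ∑ j ∈ G.children i, πn j = πn i) (j : G.V) :
    ∑ i ∈ G.children j, πn i ≤ πn j := by
  rcases (G.stage_le j).lt_or_eq with hj | hj
  · exact (hsum j hj).le
  · rw [G.children_eq_empty_of_stage_eq hj, Finset.sum_empty]
    exact hnonneg j

end ScenarioTree

section scaledShift

variable {T n : ℕ} (G : ScenarioTree T) (πn : G.V → ℝ) (Φn : G.V → Matrix (Fin n) (Fin n) ℝ)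

noncomputable def scaledBlock (i : G.V) : Matrix (Fin n) (Fin n) ℝ :=
  if i = G.root then 0 else Real.sqrt (πn i / πn (G.parent i)) • Φn i

theorem scaledShift_eq_blockShift :
    scaledShift G πn Φn = blockShift G.parent (scaledBlock G πn Φn) := by
  ext ⟨i, r⟩ ⟨j, s⟩
  by_cases hi : i = G.root <;> by_cases hj : G.parent i = j <;>
    simp [scaledShift, blockShift, scaledBlock, hi, hj]

variable {πn}

theorem opNorm_scaledBlock_sq_le (hpos : ∀ i, 0 < πn i) {L : ℝ} {i : G.V}
    (hi : i ≠ G.root) (hΦ : opNorm (Φn i) ≤ L) :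
    opNorm (scaledBlock G πn Φn i) ^ 2 ≤ πn i / πn (G.parent i) * L ^ 2 := by
  have hratio : 0 ≤ πn i / πn (G.parent i) := div_nonneg (hpos i).le (hpos _).le
  rw [scaledBlock, if_neg hi, opNorm_smul, mul_pow, sq_abs, Real.sq_sqrt hratio]
  exact mul_le_mul_of_nonneg_left (pow_le_pow_left₀ (norm_nonneg _) hΦ 2) hratio

theorem sum_opNorm_scaledBlock_sq_le (hpos : ∀ i, 0 < πn i)
    (hsum : ∀ i : G.V, G.stage i < T → ∑ j ∈ G.children i, πn j = πn i) {L : ℝ}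
    (hbdd : ∀ i : G.V, i ≠ G.root → opNorm (Φn i) ≤ L) (j : G.V) :
    ∑ i ∈ Finset.univ.filter (G.parent · = j), opNorm (scaledBlock G πn Φn i) ^ 2 ≤ L ^ 2 :=
  calc _ ≤ ∑ i ∈ G.children j, πn i / πn j * L ^ 2 := by
        rw [Finset.sum_filter, ScenarioTree.children, Finset.sum_filter]
        refine Finset.sum_le_sum fun i _ => ?_
        by_cases hi : i = G.root
        · simp [hi, scaledBlock, opNorm]
        by_cases hj : G.parent i = j
        · subst hj
          simpa [hi] using opNorm_scaledBlock_sq_le G Φn hpos hi (hbdd i hi)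
        · simp [hj]
    _ = (∑ i ∈ G.children j, πn i) / πn j * L ^ 2 := by rw [Finset.sum_div, Finset.sum_mul]
    _ ≤ L ^ 2 := mul_le_of_le_one_left (sq_nonneg L)
        ((div_le_one (hpos j)).2 (G.sum_children_le (fun i => (hpos i).le) hsum j))

end scaledShift

theorem scaled_shift_norm_bound_general
    {T n : ℕ} (G : ScenarioTree T) (πn : G.V → ℝ)
    (hpos : ∀ i, 0 < πn i)
    (hsum : ∀ i : G.V, G.stage i < T → ∑ j ∈ G.children i, πn j = πn i)
    (Φn : G.V → Matrix (Fin n) (Fin n) ℝ) (L : ℝ) (hL : 0 ≤ L)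
    (hbdd : ∀ i : G.V, i ≠ G.root → opNorm (Φn i) ≤ L) :
    opNorm (scaledShift G πn Φn) ≤ L := by
  rw [scaledShift_eq_blockShift]
  exact opNorm_blockShift_le _ _ hL (sum_opNorm_scaledBlock_sq_le G Φn hpos hsum hbdd)

/-- Lemma `basic`, part (a).  On a stage-`T` scenario tree with nodal
probabilities `π` (`π₀ = 1`, `π > 0`, children masses sum to the parent's), if all nodal
matrices `Φ̲_i` at stages `1,…,T` (the non-root nodes) satisfy `‖Φ̲_i‖ ≤ L`, then the
probability-scaled block matrix `Φ̃` satisfies `‖Φ̃‖ ≤ L`. -/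
theorem scaled_shift_norm_bound
    {T n : ℕ} (G : ScenarioTree T) (πn : G.V → ℝ)
    (hroot : πn G.root = 1) (hpos : ∀ i, 0 < πn i)
    (hsum : ∀ i : G.V, G.stage i < T → ∑ j ∈ G.children i, πn j = πn i)
    (Φn : G.V → Matrix (Fin n) (Fin n) ℝ) (L : ℝ) (hL : 0 ≤ L)
    (hbdd : ∀ i : G.V, i ≠ G.root → opNorm (Φn i) ≤ L) :
    opNorm (scaledShift G πn Φn) ≤ L :=
  scaled_shift_norm_bound_general G πn hpos hsum Φn L hL hbdd
end

section
/- Let ‖·‖ be any submultiplicative matrix norm, L ≥ 1, α ∈ (0,1), and Δ = (α^{1/2} − α)/L. Suppose the square matrices {Φ_t}_{t=t'+1}^{t''} satisfy ‖Φ_b Φ_{b−1} ⋯ Φ_a‖ ≤ L α^{b−a+1} for every t'+1 ≤ a ≤ b ≤ t'' (with the empty product equal to the identity, of norm ≤ L), and the matrices {Φ'_t}_{t=t'+1}^{t''} satisfy ‖Φ_t − Φ'_t‖ ≤ Δ for every t ∈ {t'+1,…,t''}. Then ‖Φ'_{t''} Φ'_{t''−1} ⋯ Φ'_{t'+1}‖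 ≤ L α^{(t''−t')/2}. -/
/-!
Write `Φ'_t = Φ_t + E_t` and expand the product: replacing the factors one at a time gives
`Φ'_{[a,a+k)} = Φ_{[a,a+k)} + ∑_j Φ_{(a+j,a+k)} E_{a+j} Φ'_{[a,a+j)}`. If every `Φ`-product
of length `m` has size `≤ L α^m` and `ν(E_t) ≤ δ`, induction on `k` shows that `Φ'`-products
of length `k` have size `≤ L γ^k` with `γ = α + Lδ`: the resulting bound
`L α^k + ∑_j L α^{k-1-j} δ L γ^j` equals `L γ^k` since `(γ - α) ∑_j α^{k-1-j} γ^j = γ^k - α^k`.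
For `δ = (√α - α)/L` the rate is `γ = √α`.
-/

open Matrix BigOperators

section Perturbation

variable {n : ℕ} (Φ Φ' : ℕ → Matrix (Fin n) (Fin n) ℝ)

lemma mprod_eq_add_sum (a k : ℕ) :
    mprod Φ' a k = mprod Φ a k + ∑ j ∈ Finset.range k,
      mprod Φ (a + j + 1) (k - 1 - j) * (Φ' (a + j) - Φ (a + j)) * mprod Φ' a j := by
  induction k with
  | zero => simp [mprod]
  | succ k ih =>
    have hshift : ∀ j ∈ Finset.range k,
        mprod Φ (a + j + 1) (k + 1 - 1 - j) * (Φ' (a + j) - Φ (a + j)) * mprod Φ' a j =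
          Φ (a + k) * (mprod Φ (a + j + 1) (k - 1 - j) * (Φ' (a + j) - Φ (a + j)) *
            mprod Φ' a j) := by
      intro j hj
      rw [Finset.mem_range] at hj
      have hlen : k + 1 - 1 - j = k - 1 - j + 1 := by omega
      have hidx : a + j + 1 + (k - 1 - j) = a + k := by omega
      rw [hlen, mprod, hidx, mul_assoc, mul_assoc, mul_assoc]
    rw [Finset.sum_range_succ, Finset.sum_congr rfl hshift, ← Finset.mul_sum,
      Nat.add_sub_cancel, Nat.sub_self, mprod, mprod, mprod, ih]
    noncomm_ring

variable (ν : Matrix (Fin n) (Fin n) ℝ → ℝ) (hnonneg : ∀ A, 0 ≤ ν A) (hzero : ν 0 = 0)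
  (hadd : ∀ A B, ν (A + B) ≤ ν A + ν B) (hsubmul : ∀ A B, ν (A * B) ≤ ν A * ν B)

include hnonneg hsubmul in
lemma le_mul_mul_of_submul {A B C : Matrix (Fin n) (Fin n) ℝ} {x y z : ℝ}
    (hA : ν A ≤ x) (hB : ν B ≤ y) (hC : ν C ≤ z) : ν (A * B * C) ≤ x * y * z := by
  have hx : 0 ≤ x := (hnonneg A).trans hA
  calc ν (A * B * C) ≤ ν A * ν B * ν C :=
        (hsubmul _ _).trans (mul_le_mul_of_nonneg_right (hsubmul _ _) (hnonneg C))
    _ ≤ x * y * z := mul_le_mul (mul_le_mul hA hB (hnonneg B) hx) hC (hnonneg C)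
        (mul_nonneg hx ((hnonneg B).trans hB))

include hnonneg hzero hadd hsubmul in
lemma mprod_le_of_perturbation {L α δ : ℝ} {a K : ℕ}
    (hprod : ∀ b m, a ≤ b → b + m ≤ a + K → ν (mprod Φ b m) ≤ L * α ^ m)
    (hclose : ∀ t, a ≤ t → t < a + K → ν (Φ' t - Φ t) ≤ δ) {k : ℕ} (hk : k ≤ K) :
    ν (mprod Φ' a k) ≤ L * (α + L * δ) ^ k := by
  induction k using Nat.strong_induction_on with
  | _ k ih =>
  have hterm : ∀ j ∈ Finset.range k,
      ν (mprod Φ (a + j + 1) (k - 1 - j) * (Φ' (a + j) - Φ (a + j)) * mprod Φ' a j) ≤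
        L * α ^ (k - 1 - j) * δ * (L * (α + L * δ) ^ j) := by
    intro j hj
    rw [Finset.mem_range] at hj
    exact le_mul_mul_of_submul ν hnonneg hsubmul (hprod _ _ (by omega) (by omega))
      (hclose _ (by omega) (by omega)) (ih j hj (by omega))
  calc ν (mprod Φ' a k) ≤ ν (mprod Φ a k) + ∑ j ∈ Finset.range k,
        ν (mprod Φ (a + j + 1) (k - 1 - j) * (Φ' (a + j) - Φ (a + j)) * mprod Φ' a j) := by
        rw [mprod_eq_add_sum Φ Φ']
        exact (hadd _ _).trans
          (add_le_add_right (Finset.le_sum_of_subadditive ν hzero.le hadd _ _) _)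
    _ ≤ L * α ^ k + ∑ j ∈ Finset.range k, L * α ^ (k - 1 - j) * δ * (L * (α + L * δ) ^ j) :=
        add_le_add (hprod a k le_rfl (by omega)) (Finset.sum_le_sum hterm)
    _ = L * (α ^ k + (∑ j ∈ Finset.range k, (α + L * δ) ^ j * α ^ (k - 1 - j)) *
          (α + L * δ - α)) := by
        rw [Finset.sum_mul, mul_add, Finset.mul_sum]
        congr 1
        exact Finset.sum_congr rfl fun j _ => by ring
    _ = L * (α + L * δ) ^ k := by rw [geom_sum₂_mul]; ring

end Perturbation

theorem perturbed_product_bound_general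
    {n : ℕ} (ν : Matrix (Fin n) (Fin n) ℝ → ℝ)
    (hnonneg : ∀ A, 0 ≤ ν A)
    (hadd : ∀ A B, ν (A + B) ≤ ν A + ν B)
    (hhom : ∀ (c : ℝ) (A), ν (c • A) = |c| * ν A)
    (hsubmul : ∀ A B, ν (A * B) ≤ ν A * ν B)
    (L α : ℝ) (hL : 1 ≤ L) (hα0 : 0 < α)
    (t' t'' : ℕ)
    (Φ Φ' : ℕ → Matrix (Fin n) (Fin n) ℝ)
    (hone : ν 1 ≤ L)
    (hprod : ∀ a k : ℕ, t' + 1 ≤ a → 1 ≤ k → a + k - 1 ≤ t'' →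
      ν (mprod Φ a k) ≤ L * α ^ k)
    (hclose : ∀ t, t' + 1 ≤ t → t ≤ t'' → ν (Φ t - Φ' t) ≤ (Real.sqrt α - α) / L) :
    ν (mprod Φ' (t' + 1) (t'' - t')) ≤ L * Real.sqrt (α ^ (t'' - t')) := by
  have hzero : ν 0 = 0 := by simpa using hhom 0 0
  have hprod' : ∀ b m, t' + 1 ≤ b → b + m ≤ t' + 1 + (t'' - t') →
      ν (mprod Φ b m) ≤ L * α ^ m := by
    intro b m hb hm
    rcases Nat.eq_zero_or_pos m with rfl | hm
    · simpa [mprod] using hone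
    · exact hprod b m hb hm (by omega)
  have hclose' : ∀ t, t' + 1 ≤ t → t < t' + 1 + (t'' - t') →
      ν (Φ' t - Φ t) ≤ (Real.sqrt α - α) / L := by
    intro t ht₁ ht₂
    rw [← neg_sub, ← neg_one_smul ℝ, hhom, abs_neg, abs_one, one_mul]
    exact hclose t ht₁ (by omega)
  have hrate : α + L * ((Real.sqrt α - α) / L) = Real.sqrt α := by
    rw [mul_div_cancel₀ _ (by linarith : (0 : ℝ) < L).ne']
    ring
  have hsqrt : Real.sqrt (α ^ (t'' - t')) = Real.sqrt α ^ (t'' - t') := by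
    rw [Real.sqrt_eq_iff_eq_sq (by positivity) (by positivity), ← pow_mul, mul_comm, pow_mul,
      Real.sq_sqrt hα0.le]
  rw [hsqrt, ← hrate]
  exact mprod_le_of_perturbation Φ Φ' ν hnonneg hzero hadd hsubmul hprod' hclose' le_rfl

/-- Lemma `help-3`.  For any submultiplicative matrix norm `ν`,
`L ≥ 1`, `α ∈ (0,1)`, `Δ = (√α − α)/L`: if the matrices `{Φ_t}_{t=t'+1}^{t''}` satisfy
`ν(Φ_b ⋯ Φ_a) ≤ L α^{b−a+1}` for all `t'+1 ≤ a ≤ b ≤ t''` (with the empty product, the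
identity, of norm `≤ L`), and `ν(Φ_t − Φ'_t) ≤ Δ` for `t ∈ {t'+1,…,t''}`, then
`ν(Φ'_{t''} ⋯ Φ'_{t'+1}) ≤ L α^{(t''−t')/2}`. -/
theorem perturbed_product_bound
    {n : ℕ} (ν : Matrix (Fin n) (Fin n) ℝ → ℝ)
    (hnonneg : ∀ A, 0 ≤ ν A)
    (hdef : ∀ A, ν A = 0 → A = 0)
    (hadd : ∀ A B, ν (A + B) ≤ ν A + ν B)
    (hhom : ∀ (c : ℝ) (A), ν (c • A) = |c| * ν A)
    (hsubmul : ∀ A B, ν (A * B) ≤ ν A * ν B)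
    (L α : ℝ) (hL : 1 ≤ L) (hα0 : 0 < α) (hα1 : α < 1)
    (t' t'' : ℕ) (hlt : t' < t'')
    (Φ Φ' : ℕ → Matrix (Fin n) (Fin n) ℝ)
    (hone : ν 1 ≤ L)
    (hprod : ∀ a k : ℕ, t' + 1 ≤ a → 1 ≤ k → a + k - 1 ≤ t'' →
      ν (mprod Φ a k) ≤ L * α ^ k)
    (hclose : ∀ t, t' + 1 ≤ t → t ≤ t'' → ν (Φ t - Φ' t) ≤ (Real.sqrt α - α) / L) :
    ν (mprod Φ' (t' + 1) (t'' - t')) ≤ L * Real.sqrt (α ^ (t'' - t')) :=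
  perturbed_product_bound_general ν hnonneg hadd hhom hsubmul L α hL hα0 t' t'' Φ Φ' hone hprod
    hclose
end
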